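/- Let x, y, q be complex numbers with |q| < 1, and suppose y·q^(2k+2) ≠ −1 for every integer k ≥ 0. Then Σ_{i,j≥0} x^i · y^j · q^(j²+j+2ij+i) / ((q²;q²)_i · (q²;q²)_j) = (−yq²;q²)_∞ · Σ_{i≥0} x^i · q^i / ((−yq²;q²)_i · (q²;q²)_i). -/

import Mathlib

/-!
With `Q = q²` the `i`-th row of the double series is `x^i q^i / (Q;Q)_i` times Euler's series
`∑_j Q^(j choose 2) z^j / (Q;Q)_j` at `z = y Q^(i+1)`, whose sum is `(-z;Q)_∞`; and
`(-yQ;Q)_∞ = (-yQ;Q)_i (-yQ^(i+1);Q)_∞`. Euler's identity follows from the functional equation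
`E(z) = (1 + z) E(qz)`, iterated to `E(z) = (-z;q)_n E(q^n z)`, by letting `n → ∞` and using
continuity of `E` at `0`.
-/

/-- Finite q-Pochhammer symbol `(a; q)_n = ∏_{k=0}^{n-1} (1 - a q^k)`. -/
noncomputable def qPoch (a q : ℂ) (n : ℕ) : ℂ := ∏ k ∈ Finset.range n, (1 - a * q ^ k)

/-- Infinite q-Pochhammer symbol `(a; q)_∞ = ∏_{k=0}^{∞} (1 - a q^k)`. -/
noncomputable def qPochInf (a q : ℂ) : ℂ := ∏' k : ℕ, (1 - a * q ^ k)

open Filter Topology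

theorem qPoch_succ (a q : ℂ) (n : ℕ) : qPoch a q (n + 1) = qPoch a q n * (1 - a * q ^ n) :=
  Finset.prod_range_succ _ _

theorem qPoch_ne_zero {a q : ℂ} (h : ∀ k, 1 - a * q ^ k ≠ 0) (n : ℕ) : qPoch a q n ≠ 0 :=
  Finset.prod_ne_zero_iff.mpr fun k _ => h k

theorem one_sub_norm_pow_le_norm_qPoch {a q : ℂ} (ha : ‖a‖ ≤ 1) (hq : ‖q‖ ≤ 1) (n : ℕ) :
    (1 - ‖a‖) ^ n ≤ ‖qPoch a q n‖ := by
  rw [qPoch, norm_prod, Finset.pow_eq_prod_const]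
  refine Finset.prod_le_prod (fun _ _ => sub_nonneg.2 ha) fun k _ => ?_
  calc 1 - ‖a‖ ≤ 1 - ‖a * q ^ k‖ := by
        rw [norm_mul, norm_pow]
        gcongr
        exact mul_le_of_le_one_right (norm_nonneg a) (pow_le_one₀ (norm_nonneg q) hq)
    _ ≤ ‖1 - a * q ^ k‖ := by simpa using norm_sub_norm_le (1 : ℂ) (a * q ^ k)

theorem qPoch_self_ne_zero {q : ℂ} (hq : ‖q‖ < 1) (n : ℕ) : qPoch q q n ≠ 0 := by
  rw [← norm_pos_iff]
  exact (pow_pos (sub_pos.2 hq) n).trans_le (one_sub_norm_pow_le_norm_qPoch hq.le hq.le n)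

theorem multipliable_one_sub_mul_pow {q : ℂ} (hq : ‖q‖ < 1) (a : ℂ) :
    Multipliable fun k : ℕ => 1 - a * q ^ k := by
  simp_rw [sub_eq_add_neg]
  refine multipliable_one_add_of_summable ?_
  simpa [norm_mul, norm_pow] using (summable_geometric_of_lt_one (norm_nonneg q) hq).mul_left ‖a‖

theorem tendsto_qPoch_qPochInf {q : ℂ} (hq : ‖q‖ < 1) (a : ℂ) :
    Tendsto (qPoch a q) atTop (𝓝 (qPochInf a q)) :=
  (multipliable_one_sub_mul_pow hq a).hasProd.tendsto_prod_nat

theorem qPochInf_eq_qPoch_mul {q : ℂ} (hq : ‖q‖ < 1) (a : ℂ) (n : ℕ) :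
    qPochInf a q = qPoch a q n * qPochInf (a * q ^ n) q := by
  have h : Multipliable fun k : ℕ => 1 - a * q ^ (k + n) := by
    convert multipliable_one_sub_mul_pow hq (a * q ^ n) using 2 with k
    ring
  rw [qPochInf, ← h.prod_mul_tprod_nat_mul' (f := fun k => 1 - a * q ^ k), qPoch, qPochInf]
  exact congr_arg _ (tprod_congr fun k => by ring)

theorem qPochInf_mul_div_qPoch {q : ℂ} (hq : ‖q‖ < 1) (a b : ℂ) {n : ℕ}
    (h : qPoch a q n ≠ 0) : qPochInf a q * (b / qPoch a q n) = b * qPochInf (a * q ^ n) q := by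
  rw [qPochInf_eq_qPoch_mul hq a n]
  field_simp

theorem Nat.choose_two_succ (n : ℕ) : (n + 1).choose 2 = n.choose 2 + n := by
  rw [Nat.choose_succ_succ', Nat.choose_one_right, add_comm]

theorem Nat.two_mul_choose_two_add_self (n : ℕ) : 2 * n.choose 2 + n = n ^ 2 := by
  induction n with
  | zero => rfl
  | succ n ih =>
    rw [Nat.choose_two_succ]
    linarith

theorem summable_pow_mul_pow_choose_two (r : ℝ) {ρ : ℝ} (hρ₀ : 0 ≤ ρ) (hρ : ρ < 1) :
    Summable fun n : ℕ => r ^ n * ρ ^ n.choose 2 := by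
  refine summable_of_ratio_norm_eventually_le (r := 1 / 2) (by norm_num) ?_
  have hsmall : ∀ᶠ n : ℕ in atTop, |r| * ρ ^ n ≤ 1 / 2 := by
    have h := (tendsto_pow_atTop_nhds_zero_of_lt_one hρ₀ hρ).const_mul |r|
    rw [mul_zero] at h
    exact h.eventually (ge_mem_nhds (by norm_num))
  filter_upwards [hsmall] with n hn
  rw [Nat.choose_two_succ, norm_mul, norm_mul, norm_pow, norm_pow, norm_pow, norm_pow,
    Real.norm_eq_abs, Real.norm_eq_abs, abs_of_nonneg hρ₀, pow_succ, pow_add]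
  calc |r| ^ n * |r| * (ρ ^ n.choose 2 * ρ ^ n) = |r| * ρ ^ n * (|r| ^ n * ρ ^ n.choose 2) := by
        ring
    _ ≤ 1 / 2 * (|r| ^ n * ρ ^ n.choose 2) := by gcongr

/-- Euler's second `q`-exponential `E_q(z)`. -/
noncomputable def qExp (q z : ℂ) : ℂ := ∑' n : ℕ, q ^ n.choose 2 * z ^ n / qPoch q q n

theorem norm_qExp_term_le {q z : ℂ} {r : ℝ} (hq : ‖q‖ < 1) (hz : ‖z‖ ≤ r) (n : ℕ) :
    ‖q ^ n.choose 2 * z ^ n / qPoch q q n‖ ≤ (r / (1 - ‖q‖)) ^ n * ‖q‖ ^ n.choose 2 := by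
  calc ‖q ^ n.choose 2 * z ^ n / qPoch q q n‖
      = ‖q‖ ^ n.choose 2 * ‖z‖ ^ n / ‖qPoch q q n‖ := by
        rw [norm_div, norm_mul, norm_pow, norm_pow]
    _ ≤ ‖q‖ ^ n.choose 2 * r ^ n / (1 - ‖q‖) ^ n := by
        have hr : 0 ≤ r := (norm_nonneg z).trans hz
        gcongr
        exact one_sub_norm_pow_le_norm_qPoch hq.le hq.le n
    _ = (r / (1 - ‖q‖)) ^ n * ‖q‖ ^ n.choose 2 := by
        rw [div_pow]
        ring

theorem summable_qExp {q : ℂ} (hq : ‖q‖ < 1) (z : ℂ) :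
    Summable fun n : ℕ => q ^ n.choose 2 * z ^ n / qPoch q q n :=
  .of_norm_bounded (summable_pow_mul_pow_choose_two _ (norm_nonneg q) hq)
    (norm_qExp_term_le hq le_rfl)

theorem qExp_zero (q : ℂ) : qExp q 0 = 1 := by
  rw [qExp, tsum_eq_single 0 fun n hn => by simp [zero_pow hn]]
  simp [qPoch]

theorem continuousAt_qExp_zero {q : ℂ} (hq : ‖q‖ < 1) : ContinuousAt (qExp q) 0 := by
  refine (continuousOn_tsum (fun n => by fun_prop)
    (summable_pow_mul_pow_choose_two (1 / (1 - ‖q‖)) (norm_nonneg q) hq)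
    fun n z hz => ?_).continuousAt (Metric.closedBall_mem_nhds 0 one_pos)
  exact norm_qExp_term_le hq (mem_closedBall_zero_iff.1 hz) n

theorem qExp_term_succ_sub {q : ℂ} (hq : ‖q‖ < 1) (z : ℂ) (n : ℕ) :
    q ^ (n + 1).choose 2 * z ^ (n + 1) / qPoch q q (n + 1)
      - q ^ (n + 1).choose 2 * (z * q) ^ (n + 1) / qPoch q q (n + 1)
      = z * (q ^ n.choose 2 * (z * q) ^ n / qPoch q q n) := by
  have hsucc := qPoch_self_ne_zero hq (n + 1)
  rw [qPoch_succ] at hsucc ⊢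
  rw [Nat.choose_two_succ, pow_add, ← sub_div, div_eq_iff hsucc, mul_div_assoc',
    div_mul_eq_mul_div, eq_div_iff (left_ne_zero_of_mul hsucc)]
  ring

theorem qExp_eq_one_add_mul {q : ℂ} (hq : ‖q‖ < 1) (z : ℂ) :
    qExp q z = (1 + z) * qExp q (z * q) := by
  have hdiff : qExp q z - qExp q (z * q) = z * qExp q (z * q) := by
    rw [qExp, qExp, ← (summable_qExp hq z).tsum_sub (summable_qExp hq (z * q)),
      ((summable_qExp hq z).sub (summable_qExp hq (z * q))).tsum_eq_zero_add]
    simp only [qExp_term_succ_sub hq, tsum_mul_left]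
    simp
  linear_combination hdiff

theorem qExp_eq_qPoch_mul {q : ℂ} (hq : ‖q‖ < 1) (z : ℂ) (n : ℕ) :
    qExp q z = qPoch (-z) q n * qExp q (z * q ^ n) := by
  induction n with
  | zero => simp [qPoch]
  | succ n ih =>
    rw [ih, qExp_eq_one_add_mul hq, qPoch_succ, pow_succ, mul_assoc z]
    ring

theorem qExp_eq_qPochInf {q : ℂ} (hq : ‖q‖ < 1) (z : ℂ) : qExp q z = qPochInf (-z) q := by
  have hzq : Tendsto (fun n : ℕ => z * q ^ n) atTop (𝓝 0) := by
    simpa using (tendsto_pow_atTop_nhds_zero_of_norm_lt_one hq).const_mul z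
  have hlim := (tendsto_qPoch_qPochInf hq (-z)).mul
    ((continuousAt_qExp_zero hq).tendsto.comp hzq)
  rw [qExp_zero, mul_one] at hlim
  exact tendsto_nhds_unique (tendsto_const_nhds.congr fun n => qExp_eq_qPoch_mul hq z n) hlim

theorem tendsto_qPochInf_mul_pow {q : ℂ} (hq : ‖q‖ < 1) (a : ℂ) :
    Tendsto (fun i : ℕ => qPochInf (a * q ^ i) q) atTop (𝓝 1) := by
  have h : Tendsto (fun i : ℕ => -(a * q ^ i)) atTop (𝓝 0) := by
    simpa using ((tendsto_pow_atTop_nhds_zero_of_norm_lt_one hq).const_mul a).neg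
  have hlim := (continuousAt_qExp_zero hq).tendsto.comp h
  rw [qExp_zero] at hlim
  exact hlim.congr fun i => by simp [qExp_eq_qPochInf hq]

theorem summable_norm_of_summable_mul_of_tendsto_one {a b : ℕ → ℂ}
    (hab : Summable fun i => a i * b i) (hb : Tendsto b atTop (𝓝 1)) :
    Summable fun i => ‖a i‖ := by
  have hbig : ∀ᶠ i in atTop, 1 / 2 ≤ ‖b i‖ := by
    have h := hb.norm
    rw [norm_one] at h
    exact h.eventually (le_mem_nhds (by norm_num))
  refine .of_norm_bounded_eventually_nat (hab.norm.mul_left 2) ?_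
  filter_upwards [hbig] with i hi
  rw [norm_norm, norm_mul]
  nlinarith [norm_nonneg (a i)]

theorem tsum_prod_mul_qExp_term_eq {q : ℂ} (hq : ‖q‖ < 1) (g : ℕ → ℂ) (c : ℂ) :
    ∑' p : ℕ × ℕ, g p.1 * (q ^ p.2.choose 2 * (c * q ^ p.1) ^ p.2 / qPoch q q p.2)
      = ∑' i : ℕ, g i * qPochInf (-c * q ^ i) q := by
  have hrow : ∀ i : ℕ, HasSum (fun j => g i * (q ^ j.choose 2 * (c * q ^ i) ^ j / qPoch q q j))
      (g i * qPochInf (-c * q ^ i) q) := fun i => by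
    rw [neg_mul, ← qExp_eq_qPochInf hq]
    exact ((summable_qExp hq _).hasSum).mul_left (g i)
  by_cases hS : Summable fun p : ℕ × ℕ =>
      g p.1 * (q ^ p.2.choose 2 * (c * q ^ p.1) ^ p.2 / qPoch q q p.2)
  · rw [hS.tsum_prod' fun i => (hrow i).summable]
    exact tsum_congr fun i => (hrow i).tsum_eq
  -- Divergence passes to the row sums: the tail products tend to `1`, so summable row sums
  -- would give `∑ ‖g i‖ < ∞` and hence absolute convergence of the double series.
  rw [tsum_eq_zero_of_not_summable hS, tsum_eq_zero_of_not_summable]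
  intro hcol
  have hg := summable_norm_of_summable_mul_of_tendsto_one hcol (tendsto_qPochInf_mul_pow hq (-c))
  refine hS (.of_norm_bounded (hg.mul_of_nonneg
    (summable_pow_mul_pow_choose_two (‖c‖ / (1 - ‖q‖)) (norm_nonneg q) hq)
    (fun _ => norm_nonneg _) fun _ => by positivity) fun p => ?_)
  rw [norm_mul]
  refine mul_le_mul_of_nonneg_left (norm_qExp_term_le hq ?_ p.2) (norm_nonneg _)
  rw [norm_mul, norm_pow]
  exact mul_le_of_le_one_right (norm_nonneg c) (pow_le_one₀ (norm_nonneg q) hq.le)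

theorem stmt_14 (x y q : ℂ) (hq : ‖q‖ < 1)
    (hy : ∀ k : ℕ, y * q ^ (2 * k + 2) ≠ -1) :
    (∑' p : ℕ × ℕ,
        x ^ p.1 * y ^ p.2 * q ^ (p.2 ^ 2 + p.2 + 2 * p.1 * p.2 + p.1) /
          (qPoch (q ^ 2) (q ^ 2) p.1 * qPoch (q ^ 2) (q ^ 2) p.2))
      = qPochInf (-(y * q ^ 2)) (q ^ 2) *
        ∑' i : ℕ,
          x ^ i * q ^ i /
            (qPoch (-(y * q ^ 2)) (q ^ 2) i * qPoch (q ^ 2) (q ^ 2) i) := by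
  have hQ : ‖q ^ 2‖ < 1 := by
    rw [norm_pow]
    exact pow_lt_one₀ (norm_nonneg q) hq two_ne_zero
  have hpoch : ∀ i, qPoch (-(y * q ^ 2)) (q ^ 2) i ≠ 0 := qPoch_ne_zero fun k h => hy k <| by
    rw [pow_add, pow_mul]
    linear_combination h
  have hterm : ∀ i j : ℕ, x ^ i * y ^ j * q ^ (j ^ 2 + j + 2 * i * j + i) /
        (qPoch (q ^ 2) (q ^ 2) i * qPoch (q ^ 2) (q ^ 2) j)
      = x ^ i * q ^ i / qPoch (q ^ 2) (q ^ 2) i *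
        ((q ^ 2) ^ j.choose 2 * (y * q ^ 2 * (q ^ 2) ^ i) ^ j / qPoch (q ^ 2) (q ^ 2) j) := by
    intro i j
    rw [← Nat.two_mul_choose_two_add_self j, div_mul_div_comm]
    congr 1
    ring
  calc _ = ∑' p : ℕ × ℕ, x ^ p.1 * q ^ p.1 / qPoch (q ^ 2) (q ^ 2) p.1 *
        ((q ^ 2) ^ p.2.choose 2 * (y * q ^ 2 * (q ^ 2) ^ p.1) ^ p.2 / qPoch (q ^ 2) (q ^ 2) p.2) :=
        tsum_congr fun p => hterm p.1 p.2
    _ = ∑' i : ℕ, x ^ i * q ^ i / qPoch (q ^ 2) (q ^ 2) i *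
        qPochInf (-(y * q ^ 2) * (q ^ 2) ^ i) (q ^ 2) :=
        tsum_prod_mul_qExp_term_eq hQ (fun i => x ^ i * q ^ i / qPoch (q ^ 2) (q ^ 2) i) _
    _ = _ := by
      rw [← tsum_mul_left]
      refine tsum_congr fun i => ?_
      rw [mul_comm (qPoch _ _ i), ← div_div, qPochInf_mul_div_qPoch hQ _ _ (hpoch i)]
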